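/- arXiv:1705.05466 — 5 statements merged into one kernel-verified Lean document; each statement's English description precedes it below -/
import Mathlib

section
/- For any probability measure μ on a finite set Λ and any functions w_λ : Fin 5 → ℤ (λ ∈ Λ) each satisfying w_λ(i) ∈ {0,1} and w_λ(i)·w_λ(i+1 mod 5) = 0, the averaged quantity ∑_{i=0}^{4} ∑_{λ∈Λ} w_λ(i) μ(λ) is at most 2. -/
/-- Averaging the second form of the KCBS inequality over a finite
hidden-variable space with a probability measure still yields the bound `2`. -/
theorem kcbs_hidden_variable_average (Λ : Type*) [Fintype Λ]
    (μ : Λ → ℝ) (hμ0 : ∀ l, 0 ≤ μ l) (hμ1 : ∑ l, μ l = 1)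
    (w : Λ → Fin 5 → ℤ)
    (hw : ∀ l i, w l i = 0 ∨ w l i = 1)
    (horth : ∀ l i, w l i * w l (i + 1) = 0) :
    ∑ i : Fin 5, ∑ l, (w l i : ℝ) * μ l ≤ 2 := by
  have key : ∀ l, (∑ i : Fin 5, w l i) ≤ 2 := by
    intro l
    have h0 := hw l 0; have h1 := hw l 1; have h2 := hw l 2
    have h3 := hw l 3; have h4 := hw l 4
    have g0 := horth l 0; have g1 := horth l 1; have g2 := horth l 2
    have g3 := horth l 3; have g4 := horth l 4
    simp only [Fin.sum_univ_five]
    norm_num at g0 g1 g2 g3 g4 ⊢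
    rcases h0 with e|e <;> rcases h1 with e1|e1 <;> rcases h2 with e2|e2 <;>
      rcases h3 with e3|e3 <;> rcases h4 with e4|e4 <;>
      simp_all <;> omega
  rw [Finset.sum_comm]
  calc ∑ l, ∑ i : Fin 5, (w l i : ℝ) * μ l
      = ∑ l, (∑ i : Fin 5, (w l i : ℝ)) * μ l := by
        simp [Finset.sum_mul]
    _ ≤ ∑ l, 2 * μ l := by
        apply Finset.sum_le_sum
        intro l _
        apply mul_le_mul_of_nonneg_right _ (hμ0 l)
        have := key l
        push_cast
        exact_mod_cast this
    _ = 2 := by rw [← Finset.mul_sum, hμ1, mul_one]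
end

section
/- With the KCBS vectors Ψ_0,...,Ψ_4 as above and Ψ = (0,0,1), one has ∑_{i=0}^{4} |⟨Ψ_i, Ψ⟩|² = 5·cos(π/5)/(1+cos(π/5)) = √5, which is strictly greater than 2. -/
/-- The five KCBS pentagram unit vectors in `ℝ³`. -/
noncomputable def kcbsVec : Fin 5 → Fin 3 → ℝ := fun i j =>
  (Real.sqrt (1 + Real.cos (Real.pi / 5)))⁻¹ *
  (![![1, 0, Real.sqrt (Real.cos (Real.pi / 5))],
     ![Real.cos (4 * Real.pi / 5), Real.sin (4 * Real.pi / 5),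
       Real.sqrt (Real.cos (Real.pi / 5))],
     ![Real.cos (2 * Real.pi / 5), -Real.sin (2 * Real.pi / 5),
       Real.sqrt (Real.cos (Real.pi / 5))],
     ![Real.cos (2 * Real.pi / 5), Real.sin (2 * Real.pi / 5),
       Real.sqrt (Real.cos (Real.pi / 5))],
     ![Real.cos (4 * Real.pi / 5), -Real.sin (4 * Real.pi / 5),
       Real.sqrt (Real.cos (Real.pi / 5))]] i j)

/-- With `Ψ = (0,0,1)`, the sum `∑ |⟨Ψ_i, Ψ⟩|²` over the KCBS vectors equals
`5 cos(π/5)/(1+cos(π/5)) = √5 > 2`: the vector state induced by `Ψ` violates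
the KCBS inequality. -/
theorem kcbs_violation_vector_state :
    (∑ i : Fin 5, (∑ j : Fin 3, kcbsVec i j * ![(0 : ℝ), 0, 1] j) ^ 2
        = 5 * Real.cos (Real.pi / 5) / (1 + Real.cos (Real.pi / 5))) ∧
    (∑ i : Fin 5, (∑ j : Fin 3, kcbsVec i j * ![(0 : ℝ), 0, 1] j) ^ 2
        = Real.sqrt 5) ∧
    (2 : ℝ) < ∑ i : Fin 5, (∑ j : Fin 3, kcbsVec i j * ![(0 : ℝ), 0, 1] j) ^ 2 := by
  have hc : Real.cos (Real.pi / 5) = (1 + Real.sqrt 5) / 4 := Real.cos_pi_div_five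
  have h5 : (0:ℝ) ≤ 5 := by norm_num
  have hs5 : Real.sqrt 5 ^ 2 = 5 := Real.sq_sqrt h5
  have hs5nn : (0:ℝ) ≤ Real.sqrt 5 := Real.sqrt_nonneg 5
  have hcnn : (0:ℝ) ≤ Real.cos (Real.pi / 5) := by rw [hc]; positivity
  have h1c : (0:ℝ) < 1 + Real.cos (Real.pi / 5) := by rw [hc]; positivity
  have hsq : ((Real.sqrt (1 + Real.cos (Real.pi / 5)))⁻¹ *
      Real.sqrt (Real.cos (Real.pi / 5))) ^ 2
      = Real.cos (Real.pi / 5) / (1 + Real.cos (Real.pi / 5)) := by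
    rw [mul_pow, inv_pow, Real.sq_sqrt h1c.le, Real.sq_sqrt hcnn, inv_mul_eq_div]
  have hsum : (∑ i : Fin 5, (∑ j : Fin 3, kcbsVec i j * ![(0 : ℝ), 0, 1] j) ^ 2)
      = 5 * Real.cos (Real.pi / 5) / (1 + Real.cos (Real.pi / 5)) := by
    simp only [kcbsVec, Fin.sum_univ_succ, Finset.sum_empty, Fin.sum_univ_zero,
      Matrix.cons_val_zero, Matrix.cons_val_succ, Fin.succ_zero_eq_one,
      Matrix.cons_val_one, Matrix.head_cons, mul_zero, mul_one, zero_add, add_zero]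
    rw [mul_pow, inv_pow, Real.sq_sqrt h1c.le, Real.sq_sqrt hcnn]
    ring
  refine ⟨hsum, ?_, ?_⟩
  · rw [hsum, hc]
    rw [div_eq_iff (by rw [hc] at h1c; linarith)]
    nlinarith [hs5]
  · rw [hsum, hc, lt_div_iff₀ (by rw [hc] at h1c; linarith)]
    nlinarith [hs5, hs5nn]
end

section
/- Let τ be a tracial state on a finite von Neumann algebra N, and let P_0,...,P_4 be projections in N with P_i P_{i+1} = 0 for all i (indices mod 5). Then τ(P_0) + τ(P_1) + τ(P_2) + τ(P_3) + τ(P_4) ≤ 2. -/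
open scoped ComplexOrder

namespace KCBSAux

variable {H : Type*} [NormedAddCommGroup H] [InnerProductSpace ℂ H] [CompleteSpace H]
variable {N : VonNeumannAlgebra H} {τ : (H →L[ℂ] H) →ₗ[ℂ] ℂ}

lemma pos2 (hτpos : ∀ a ∈ N, 0 ≤ τ (star a * a))
    (hτtr : ∀ a ∈ N, ∀ b ∈ N, τ (a * b) = τ (b * a))
    {c d : H →L[ℂ] H} (hc : c ∈ N) (hd : d ∈ N) :
    0 ≤ τ (star c * c * (star d * d)) := by
  have h1 : 0 ≤ τ (star (c * star d) * (c * star d)) :=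
    hτpos _ (mul_mem hc (star_mem hd))
  have h2 : star (c * star d) * (c * star d) = (d * (star c * c)) * star d := by
    rw [star_mul, star_star]; noncomm_ring
  rw [h2, hτtr _ (mul_mem hd (mul_mem (star_mem hc) hc)) _ (star_mem hd)] at h1
  have h3 : star d * (d * (star c * c)) = star d * d * (star c * c) := by
    noncomm_ring
  rw [h3, hτtr _ (mul_mem (star_mem hd) hd) _ (mul_mem (star_mem hc) hc)] at h1
  exact h1

section Pair

variable {p r Z : H →L[ℂ] H}
variable (hτpos : ∀ a ∈ N, 0 ≤ τ (star a * a))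
variable (hτtr : ∀ a ∈ N, ∀ b ∈ N, τ (a * b) = τ (b * a))
variable (hpN : p ∈ N) (hrN : r ∈ N) (hZN : Z ∈ N)
variable (hp2 : p * p = p) (hr2 : r * r = r)
variable (hps : star p = p) (hrs : star r = r) (hZs : star Z = Z)

include hτpos hτtr hpN hrN hZN hp2 hr2 hps hrs hZs in
lemma termpos (k : ℕ) :
    0 ≤ τ ((p * (p*r*p)^k - (p*r*p)^(k+1)) * (Z * Z)) := by
  set A : H →L[ℂ] H := p*r*p with hA
  have hAN : A ∈ N := mul_mem (mul_mem hpN hrN) hpN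
  have hpp : ∀ x : H →L[ℂ] H, p * (p * x) = p * x := fun x => by rw [← mul_assoc, hp2]
  have hrr : ∀ x : H →L[ℂ] H, r * (r * x) = r * x := fun x => by rw [← mul_assoc, hr2]
  have hsA : star A = A := by rw [hA]; simp only [star_mul, hps, hrs, mul_assoc]
  have hpA : p * A = A := by rw [hA, ← mul_assoc, ← mul_assoc, hp2]
  have hAp : A * p = A := by rw [hA, mul_assoc, hp2]
  have key : ∀ c : H →L[ℂ] H, c ∈ N → p * A^k - A^(k+1) = star c * c →
      0 ≤ τ ((p * A^k - A^(k+1)) * (Z * Z)) := by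
    intro c hcN hcc
    rw [hcc, show (Z*Z) = star Z * Z by rw [hZs]]
    exact pos2 hτpos hτtr hcN hZN
  have absorbL : ∀ n, 1 ≤ n → p * A^n = A^n := by
    intro n hn
    obtain ⟨n', rfl⟩ := Nat.exists_eq_add_of_le' hn
    rw [pow_succ', ← mul_assoc, hpA]
  have sandwich : ∀ w : H →L[ℂ] H, ∀ cc : ℕ, A*(w*A) = A^cc →
      ∀ n', A^(n'+1)*(w*A^(n'+1)) = A^(n'+(cc+n')) := by
    intro w cc hbase n'
    nth_rewrite 2 [pow_succ']
    rw [pow_succ]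
    calc A^n'*A*(w*(A*A^n'))
        = A^n'*((A*(w*A))*A^n') := by simp only [mul_assoc]
      _ = A^n'*(A^cc*A^n') := by rw [hbase]
      _ = A^(n'+(cc+n')) := by rw [← pow_add, ← pow_add]
  have hW1base : A*(r*A) = A^3 := by
    rw [pow_succ, pow_two, hA]
    simp only [mul_assoc, hpp, hrr]
  have hW2base : A*((r*(p*r))*A) = A^4 := by
    rw [pow_succ, pow_succ, pow_two, hA]
    simp only [mul_assoc, hpp, hrr]
  have W1 : ∀ n, 1 ≤ n → A^n*(r*A^n) = A^(n+n+1) := by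
    intro n hn
    obtain ⟨n', rfl⟩ := Nat.exists_eq_add_of_le' hn
    rw [sandwich r 3 hW1base n']
    congr 1; omega
  have W2 : ∀ n, 1 ≤ n → A^n*(r*(p*(r*A^n))) = A^(n+n+2) := by
    intro n hn
    obtain ⟨n', rfl⟩ := Nat.exists_eq_add_of_le' hn
    have h := sandwich (r*(p*r)) 4 hW2base n'
    simp only [mul_assoc] at h
    rw [h]
    congr 1; omega
  rcases Nat.even_or_odd k with ⟨j, rfl⟩ | ⟨j, rfl⟩
  · rcases Nat.eq_zero_or_pos j with rfl | hj
    · refine key ((1-r)*p) (mul_mem (sub_mem (one_mem N) hrN) hpN) ?_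
      have hst : star ((1-r)*p) = p * (1-r) := by
        rw [star_mul, star_sub, star_one, hps, hrs]
      rw [hst, hA]
      simp only [Nat.add_zero, pow_zero, pow_one, mul_one]
      simp only [mul_sub, sub_mul, mul_one, one_mul, mul_assoc, hpp, hrr, hp2, hr2]
      abel
    · refine key ((1-r)*A^j)
        (mul_mem (sub_mem (one_mem N) hrN) (pow_mem hAN j)) ?_
      have hst : star ((1-r)*A^j) = A^j * (1-r) := by
        rw [star_mul, star_sub, star_one, hrs, star_pow, hsA]
      rw [hst, absorbL (j+j) (by omega)]
      simp only [mul_sub, sub_mul, mul_one, one_mul, mul_assoc, hrr, ← pow_add]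
      rw [W1 j hj]
      abel
  · rcases Nat.eq_zero_or_pos j with rfl | hj
    · refine key ((1-p)*(r*p)) (mul_mem (sub_mem (one_mem N) hpN) (mul_mem hrN hpN)) ?_
      have hst : star ((1-p)*(r*p)) = (p*r) * (1-p) := by
        rw [star_mul, star_sub, star_one, star_mul, hps, hrs]
      rw [hst, show 2*0+1 = 1 by norm_num, absorbL 1 le_rfl, pow_one, pow_two, hA]
      simp only [mul_sub, sub_mul, mul_one, one_mul, mul_assoc, hpp, hrr, hp2, hr2]
      abel
    · refine key ((1-p)*(r*A^j))
        (mul_mem (sub_mem (one_mem N) hpN) (mul_mem hrN (pow_mem hAN j))) ?_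
      have hst : star ((1-p)*(r*A^j)) = (A^j*r) * (1-p) := by
        rw [star_mul, star_sub, star_one, hps, star_mul, hrs, star_pow, hsA]
      have e1 : 2*j+1 = j+j+1 := by omega
      have e2 : 2*j+1+1 = j+j+2 := by omega
      rw [hst, e2, e1, absorbL (j+j+1) (by omega)]
      simp only [mul_sub, sub_mul, mul_one, one_mul, mul_assoc, hpp, hrr]
      rw [W1 j hj, W2 j hj]
      abel


include hτpos hτtr hpN hrN hZN hp2 hr2 hps hrs hZs in
lemma monopos (k : ℕ) (hk : 1 ≤ k) :
    0 ≤ τ (((p*r*p)^k - (p*r*p)^(k+1)) * (Z * Z)) := by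
  have h := termpos hτpos hτtr hpN hrN hZN hp2 hr2 hps hrs hZs (k := k)
  have habs : p * (p*r*p)^k = (p*r*p)^k := by
    obtain ⟨n', rfl⟩ := Nat.exists_eq_add_of_le' hk
    rw [pow_succ', ← mul_assoc, ← mul_assoc, ← mul_assoc, hp2]
  rwa [habs] at h

include hτpos hτtr hpN hrN hZN hp2 hr2 hps hrs hZs in
lemma telepos (m : ℕ) (hm : 1 ≤ m) :
    0 ≤ τ ((p - (p*r*p)^m) * (Z * Z)) := by
  induction m with
  | zero => omega
  | succ n ih =>
    rcases Nat.eq_zero_or_pos n with rfl | hn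
    · have h0 := termpos hτpos hτtr hpN hrN hZN hp2 hr2 hps hrs hZs (k := 0)
      simpa using h0
    · have h1 := ih hn
      have h2 := monopos hτpos hτtr hpN hrN hZN hp2 hr2 hps hrs hZs n hn
      have h3 : (p - (p*r*p)^(n+1)) * (Z*Z)
          = (p - (p*r*p)^n)*(Z*Z) + ((p*r*p)^n - (p*r*p)^(n+1))*(Z*Z) := by
        noncomm_ring
      rw [h3, map_add]
      exact add_nonneg h1 h2

include hτpos hτtr hpN hrN hZN hp2 hr2 hps hrs hZs in
lemma diffpos (k l : ℕ) (hk : 1 ≤ k) (hkl : k ≤ l) :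
    0 ≤ τ (((p*r*p)^k - (p*r*p)^l) * (Z * Z)) := by
  induction l, hkl using Nat.le_induction with
  | base =>
    rw [sub_self, zero_mul, map_zero]
  | succ n hn ih =>
    have h2 := monopos hτpos hτtr hpN hrN hZN hp2 hr2 hps hrs hZs n (le_trans hk hn)
    have h3 : ((p*r*p)^k - (p*r*p)^(n+1)) * (Z*Z)
        = ((p*r*p)^k - (p*r*p)^n)*(Z*Z) + ((p*r*p)^n - (p*r*p)^(n+1))*(Z*Z) := by
      noncomm_ring
    rw [h3, map_add]
    exact add_nonneg ih h2

end Pair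

section Cross

variable {p r t : H →L[ℂ] H}
variable (hτpos : ∀ a ∈ N, 0 ≤ τ (star a * a))
variable (hτtr : ∀ a ∈ N, ∀ b ∈ N, τ (a * b) = τ (b * a))
variable (hpN : p ∈ N) (hrN : r ∈ N) (htN : t ∈ N)
variable (hp2 : p * p = p) (hr2 : r * r = r) (ht2 : t * t = t)
variable (hps : star p = p) (hrs : star r = r) (hts : star t = t)
variable (hpt : p * t = 0) (htp : t * p = 0)

include hτpos hτtr hpN hrN htN hp2 hr2 ht2 hps hrs hts hpt htp in
lemma crosspos (g : ℕ) (hg : 1 ≤ g) :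
    0 ≤ τ ((r*t*r)^(2*g)) - τ ((r*t*r)^(2*g+1)) - τ ((p*r*p)^(2*g) * ((r*t*r)^(2*g))) := by
  set B : H →L[ℂ] H := r*t*r with hB
  have hBN : B ∈ N := mul_mem (mul_mem hrN htN) hrN
  have hZs : star (B^g) = B^g := by
    rw [star_pow]
    congr 1
    rw [hB]; simp only [star_mul, hrs, hts, mul_assoc]
  have hZZ : B^g * B^g = B^(2*g) := by rw [← pow_add]; congr 1; omega
  have s1 := telepos (Z := B^g) hτpos hτtr hpN hrN (pow_mem hBN g) hp2 hr2 hps hrs hZs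
    (2*g) (by omega)
  rw [hZZ, sub_mul, map_sub] at s1
  have he2 : (1 - t - p) * (1 - t - p) = 1 - t - p := by
    have expand : (1 - t - p) * (1 - t - p)
        = 1 - t - p - t + t*t + t*p - p + p*t + p*p := by noncomm_ring
    rw [expand, ht2, hp2, hpt, htp]
    abel
  have hes : star (1 - t - p) = 1 - t - p := by
    rw [star_sub, star_sub, star_one, hts, hps]
  have heN : (1:H →L[ℂ] H) - t - p ∈ N := sub_mem (sub_mem (one_mem N) htN) hpN
  have s2 := pos2 hτpos hτtr (c := 1 - t - p) (d := B^g) heN (pow_mem hBN g)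
  rw [hes, he2, hZs, hZZ, sub_mul, sub_mul, one_mul, map_sub, map_sub] at s2
  -- s3
  have hrB : r * B = B := by rw [hB, ← mul_assoc, ← mul_assoc, hr2]
  have hBr : B * r = B := by rw [hB, mul_assoc, hr2]
  have habsL : r * B^(2*g) = B^(2*g) := by
    have h1 : 2*g = (2*g-1)+1 := by omega
    rw [h1, pow_succ', ← mul_assoc, hrB]
  have habsR : B^(2*g) * r = B^(2*g) := by
    have h1 : 2*g = (2*g-1)+1 := by omega
    rw [h1, pow_succ, mul_assoc, hBr]
  have s3 : τ (t * B^(2*g)) = τ (B^(2*g+1)) := by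
    have h1 : B^(2*g+1) = (B^(2*g) * (r*t)) * r := by
      rw [pow_succ, hB]; simp only [mul_assoc]
    have h2 : r * (B^(2*g) * (r*t)) = B^(2*g) * t := by
      rw [← mul_assoc, habsL, ← mul_assoc, habsR]
    rw [h1, hτtr _ (mul_mem (pow_mem hBN (2*g)) (mul_mem hrN htN)) _ hrN, h2,
      hτtr _ (pow_mem hBN (2*g)) _ htN]
  have szero : (0:ℂ) ≤ τ (t * B^(2*g)) - τ (B^(2*g+1)) := le_of_eq (by rw [s3, sub_self])
  calc (0:ℂ) ≤ (τ (p * B^(2*g)) - τ ((p*r*p)^(2*g) * B^(2*g)))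
        + (τ (B^(2*g)) - τ (t * B^(2*g)) - τ (p * B^(2*g)))
        + (τ (t * B^(2*g)) - τ (B^(2*g+1))) := by
        refine add_nonneg (add_nonneg s1 s2) szero
    _ = τ (B^(2*g)) - τ (B^(2*g+1)) - τ ((p*r*p)^(2*g) * B^(2*g)) := by ring

end Cross

section K1sec

variable {p q q' : H →L[ℂ] H}
variable (hτpos : ∀ a ∈ N, 0 ≤ τ (star a * a))
variable (hτtr : ∀ a ∈ N, ∀ b ∈ N, τ (a * b) = τ (b * a))
variable (hpN : p ∈ N) (hqN : q ∈ N) (hq'N : q' ∈ N)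
variable (hp2 : p * p = p) (hq2 : q * q = q) (hq'2 : q' * q' = q')
variable (hps : star p = p) (hqs : star q = q) (hq's : star q' = q')
variable (hpq' : p * q' = 0) (hq'p : q' * p = 0) (hqq' : q * q' = 0) (hq'q : q' * q = 0)

include hτpos hτtr hpN hqN hq'N hp2 hq2 hq'2 hps hqs hq's hpq' hq'p hqq' hq'q in
lemma K1pos (g : ℕ) (hg : 1 ≤ g) :
    0 ≤ τ 1 - τ p - τ q' - τ q + τ ((p*q*p)^(2*g)) := by
  have hpp : ∀ z : H →L[ℂ] H, p * (p * z) = p * z := fun z => by rw [← mul_assoc, hp2]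
  have hqq : ∀ z : H →L[ℂ] H, q * (q * z) = q * z := fun z => by rw [← mul_assoc, hq2]
  set A : H →L[ℂ] H := p*q*p with hA
  have hAN : A ∈ N := mul_mem (mul_mem hpN hqN) hpN
  have hpA : p * A = A := by rw [hA, ← mul_assoc, ← mul_assoc, hp2]
  have hAp : A * p = A := by rw [hA, mul_assoc, hp2]
  have habsR : ∀ n, 1 ≤ n → A^n * p = A^n := by
    intro n hn
    obtain ⟨n', rfl⟩ := Nat.exists_eq_add_of_le' hn
    rw [pow_succ, mul_assoc, hAp]
  set x : H →L[ℂ] H := (1-q)*p with hx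
  have hxN : x ∈ N := mul_mem (sub_mem (one_mem N) hqN) hpN
  have hxs : star x = p * (1-q) := by rw [hx, star_mul, star_sub, star_one, hqs, hps]
  set b : H →L[ℂ] H := x * star x with hb
  have hbN : b ∈ N := mul_mem hxN (star_mem hxN)
  have hbs : star b = b := by rw [hb, star_mul, star_star]
  set y : H →L[ℂ] H := star x * x with hy
  have hyval : y = p - A := by
    rw [hy, hxs, hx, hA]
    have e1 : p * (1-q) * ((1-q)*p) = p*p - p*(q*p) - p*(q*p) + p*(q*(q*p)) := by
      noncomm_ring
    rw [e1, hp2, hqq]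
    have e2 : p*q*p = p*(q*p) := by rw [mul_assoc]
    rw [e2]; abel
  have hbx : b * x = x * y := by rw [hb, hy, mul_assoc]
  have aux : ∀ n, (1-b)^n * x = x * (1-y)^n := by
    intro n
    induction n with
    | zero => simp
    | succ n ih =>
      calc (1-b)^(n+1) * x = (1-b)^n * ((1-b)*x) := by rw [pow_succ, mul_assoc]
        _ = (1-b)^n * (x*(1-y)) := by
            rw [show (1-b)*x = x*(1-y) by rw [sub_mul, one_mul, hbx, mul_sub, mul_one]]
        _ = (x*(1-y)^n) * (1-y) := by rw [← mul_assoc, ih]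
        _ = x * (1-y)^(n+1) := by rw [mul_assoc, ← pow_succ]
  have traceEq : ∀ n, τ ((1-b)^n) = τ ((1-y)^n) := by
    intro n
    induction n with
    | zero => simp
    | succ n ih =>
      have hub : (1-b)^n * x ∈ N := mul_mem (pow_mem (sub_mem (one_mem N) hbN) n) hxN
      have hby : τ ((1-b)^n * b) = τ (y * (1-y)^n) := by
        calc τ ((1-b)^n * b) = τ (((1-b)^n * x) * star x) := by rw [hb, ← mul_assoc]
          _ = τ (star x * ((1-b)^n * x)) := hτtr _ hub _ (star_mem hxN)
          _ = τ (star x * (x * (1-y)^n)) := by rw [aux n]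
          _ = τ (y * (1-y)^n) := by rw [← mul_assoc, ← hy]
      have hcomm : Commute y (1 - y) := (Commute.one_right y).sub_right (Commute.refl y)
      have hcy : (1-y)^n * y = y * (1-y)^n := ((hcomm.pow_right n).eq).symm
      calc τ ((1-b)^(n+1)) = τ ((1-b)^n) - τ ((1-b)^n * b) := by
            rw [pow_succ, mul_sub, mul_one, map_sub]
        _ = τ ((1-y)^n) - τ (y * (1-y)^n) := by rw [ih, hby]
        _ = τ ((1-y)^(n+1)) := by rw [pow_succ, mul_sub, mul_one, map_sub, hcy]
  have yIdent : ∀ n, 1 ≤ n → (1-y)^n = (1-p) + A^n := by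
    intro n hn
    induction n with
    | zero => omega
    | succ n ih =>
      rcases Nat.eq_zero_or_pos n with rfl | hn'
      · rw [pow_one, pow_one, hyval]; abel
      · have ihn := ih hn'
        have hyp1 : (1-p) * (1-y) = 1-p := by
          rw [hyval]
          have e1 : (1-p)*(1-(p-A)) = 1 - p - (p - A - p*p + p*A) := by noncomm_ring
          rw [e1, hp2, hpA]; abel
        have hAy : A^n * (1-y) = A^(n+1) := by
          rw [hyval]
          have e1 : A^n*(1-(p-A)) = A^n - A^n*p + A^n*A := by noncomm_ring
          rw [e1, habsR n hn', ← pow_succ]; abel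
        calc (1-y)^(n+1) = ((1-p) + A^n) * (1-y) := by rw [pow_succ, ihn]
          _ = (1-p) + A^(n+1) := by rw [add_mul, hyp1, hAy]
  set e : H →L[ℂ] H := 1 - q' - q with he
  have heN : e ∈ N := sub_mem (sub_mem (one_mem N) hq'N) hqN
  have hes : star e = e := by rw [he, star_sub, star_sub, star_one, hq's, hqs]
  have h1e : 1 - e = q' + q := by rw [he]; abel
  have he2 : e * e = e := by
    rw [he]
    have e1 : (1-q'-q)*(1-q'-q)
        = 1 - q' - q - q' + q'*q' + q'*q - q + q*q' + q*q := by noncomm_ring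
    rw [e1, hq'2, hq2, hq'q, hqq']
    abel
  have hx1e : star x * (1-e) = 0 := by
    rw [hxs, h1e]
    have e1 : p*(1-q)*(q'+q) = p*q' - p*(q*q') + (p*q - p*(q*q)) := by noncomm_ring
    rw [e1, hq2, hqq', hpq', mul_zero]
    simp
  have hbe : b * (1-e) = 0 := by rw [hb, mul_assoc, hx1e, mul_zero]
  have hex : (1-e) * x = 0 := by
    rw [h1e, hx]
    have e1 : (q'+q)*((1-q)*p) = q'*p - q'*(q*p) + (q*p - q*(q*p)) := by noncomm_ring
    rw [e1, hq'p, hqq, ← mul_assoc, hq'q, zero_mul]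
    simp
  have heb : (1-e) * b = 0 := by rw [hb, ← mul_assoc, hex, zero_mul]
  have hue : ∀ n, (1-b)^n * (1-e) = 1-e := by
    intro n
    induction n with
    | zero => simp
    | succ n ih =>
      calc (1-b)^(n+1)*(1-e) = (1-b)*((1-b)^n*(1-e)) := by rw [pow_succ', mul_assoc]
        _ = (1-b)*(1-e) := by rw [ih]
        _ = 1-e := by rw [sub_mul, one_mul, hbe, sub_zero]
  have heu : ∀ n, (1-e) * (1-b)^n = 1-e := by
    intro n
    induction n with
    | zero => simp
    | succ n ih =>
      calc (1-e)*(1-b)^(n+1) = ((1-e)*(1-b)^n)*(1-b) := by rw [pow_succ, mul_assoc]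
        _ = (1-e)*(1-b) := by rw [ih]
        _ = 1-e := by rw [mul_sub, mul_one, heb, sub_zero]
  have heue : e * (1-b)^(2*g) * e = (1-b)^(2*g) + e - 1 := by
    have h1 : e * (1-b)^(2*g) = (1-b)^(2*g) - (1-e) := by
      have e1 : e * (1-b)^(2*g) = (1-b)^(2*g) - (1-e)*(1-b)^(2*g) := by noncomm_ring
      rw [e1, heu]
    have h2 : (1-b)^(2*g) * e = (1-b)^(2*g) - (1-e) := by
      have e1 : (1-b)^(2*g) * e = (1-b)^(2*g) - (1-b)^(2*g)*(1-e) := by noncomm_ring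
      rw [e1, hue]
    have h3 : (1-e)*e = 0 := by
      have e1 : (1-e)*e = e - e*e := by noncomm_ring
      rw [e1, he2, sub_self]
    calc e*(1-b)^(2*g)*e = ((1-b)^(2*g) - (1-e))*e := by rw [h1]
      _ = ((1-b)^(2*g) - (1-e)) - 0 := by rw [sub_mul, h2, h3]
      _ = (1-b)^(2*g) + e - 1 := by abel
  have hz : star ((1-b)^g * e) * ((1-b)^g * e) = (1-b)^(2*g) + e - 1 := by
    have hzs : star ((1-b)^g * e) = e * (1-b)^g := by
      rw [star_mul, hes, star_pow, star_sub, star_one, hbs]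
    rw [hzs]
    have h4 : e*(1-b)^g*((1-b)^g*e) = e*((1-b)^g*(1-b)^g)*e := by simp only [mul_assoc]
    rw [h4, ← pow_add, show g+g = 2*g from by omega, heue]
  have pos := hτpos _ (mul_mem (pow_mem (sub_mem (one_mem N) hbN) g) heN)
  rw [hz] at pos
  have tb : τ ((1-b)^(2*g)) = τ 1 - τ p + τ (A^(2*g)) := by
    rw [traceEq, yIdent (2*g) (by omega), map_add, map_sub]
  have te : τ e = τ 1 - τ q' - τ q := by rw [he, map_sub, map_sub]
  have final : τ ((1-b)^(2*g) + e - 1)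
      = τ 1 - τ p - τ q' - τ q + τ (A^(2*g)) := by
    rw [map_sub, map_add, tb, te]
    ring
  rw [final] at pos
  exact pos

end K1sec

lemma wordOrth3 {R : Type*} [Ring R] {x1 x2 x3 y1 y2 y3 : R} (h : x3 * y1 = 0) :
    (x1*x2*x3)*(y1*y2*y3) = 0 := by
  have e : (x1*x2*x3)*(y1*y2*y3) = x1*(x2*((x3*y1)*(y2*y3))) := by noncomm_ring
  rw [e, h, zero_mul, mul_zero, mul_zero]

lemma powMulZero {M : Type*} [MonoidWithZero M] {x y : M} (h : x * y = 0)
    (m : ℕ) (hm : 1 ≤ m) : x^m * y^m = 0 := by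
  obtain ⟨m', rfl⟩ := Nat.exists_eq_add_of_le' hm
  rw [pow_succ, pow_succ', mul_assoc, ← mul_assoc x y, h, zero_mul, mul_zero]

end KCBSAux


open KCBSAux in
/-- Theorem 3.2: a tracial state `τ` of a finite von Neumann algebra `N` does
not violate the KCBS inequality: for projections `P₀, …, P₄ ∈ N` with
`Pᵢ P_{i+1} = 0` (indices mod 5), `τ(P₀) + ⋯ + τ(P₄) ≤ 2`. -/
theorem tracial_state_does_not_violate_kcbs
    {H : Type*} [NormedAddCommGroup H] [InnerProductSpace ℂ H] [CompleteSpace H]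
    (N : VonNeumannAlgebra H)
    -- `N` is finite: every isometry in `N` is a unitary
    (hfin : ∀ v ∈ N, star v * v = 1 → v * star v = 1)
    -- `τ` is a tracial state of `N`
    (τ : (H →L[ℂ] H) →ₗ[ℂ] ℂ)
    (hτpos : ∀ a ∈ N, 0 ≤ τ (star a * a))
    (hτ1 : τ 1 = 1)
    (hτtr : ∀ a ∈ N, ∀ b ∈ N, τ (a * b) = τ (b * a))
    -- `P₀, …, P₄` are projections in `N` with cyclically adjacent products zero
    (P : Fin 5 → (H →L[ℂ] H))
    (hmem : ∀ i, P i ∈ N)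
    (hsa : ∀ i, IsSelfAdjoint (P i))
    (hidem : ∀ i, P i * P i = P i)
    (horth : ∀ i, P i * P (i + 1) = 0) :
    τ (P 0) + τ (P 1) + τ (P 2) + τ (P 3) + τ (P 4) ≤ 2 := by
  clear hfin
  have hPs : ∀ i, star (P i) = P i := fun i => (hsa i).star_eq
  have horth' : ∀ i : Fin 5, P (i+1) * P i = 0 := by
    intro i
    have h := congrArg star (horth i)
    rwa [star_mul, hPs, hPs, star_zero] at h
  -- im parts vanish and τ(P i) is ≥ 0
  have hposP : ∀ i, 0 ≤ τ (P i) := by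
    intro i
    have h := hτpos (P i) (hmem i)
    rwa [hPs i, hidem i] at h
  -- generic pair facts (no orthogonality needed)
  have pair_mono : ∀ i j : Fin 5, ∀ k, 1 ≤ k →
      (τ ((P i * P j * P i)^(k+1))).re ≤ (τ ((P i * P j * P i)^k)).re := by
    intro i j k hk
    have h := monopos (N := N) (τ := τ) hτpos hτtr (hmem i) (hmem j) (one_mem N)
      (hidem i) (hidem j) (hPs i) (hPs j) (star_one _) k hk
    simp only [mul_one] at h
    rw [map_sub] at h
    have h2 := (Complex.le_def.mp h).1
    simp only [Complex.sub_re, Complex.zero_re] at h2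
    linarith
  have pair_diff : ∀ i j : Fin 5, ∀ k l, 1 ≤ k → k ≤ l →
      (τ ((P i * P j * P i)^l)).re ≤ (τ ((P i * P j * P i)^k)).re := by
    intro i j k l hk hkl
    have h := diffpos (N := N) (τ := τ) hτpos hτtr (hmem i) (hmem j) (one_mem N)
      (hidem i) (hidem j) (hPs i) (hPs j) (star_one _) k l hk hkl
    simp only [mul_one] at h
    rw [map_sub] at h
    have h2 := (Complex.le_def.mp h).1
    simp only [Complex.sub_re, Complex.zero_re] at h2
    linarith
  have pair_le1 : ∀ i j : Fin 5, (τ ((P i * P j * P i)^1)).re ≤ 1 := by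
    intro i j
    have h := telepos (N := N) (τ := τ) hτpos hτtr (hmem i) (hmem j) (one_mem N)
      (hidem i) (hidem j) (hPs i) (hPs j) (star_one _) 1 le_rfl
    simp only [mul_one] at h
    rw [map_sub] at h
    have h2 := (Complex.le_def.mp h).1
    simp only [Complex.sub_re, Complex.zero_re] at h2
    have h3 : 0 ≤ τ (star (1 - P i) * (1 - P i)) :=
      hτpos _ (sub_mem (one_mem N) (hmem i))
    have h4 : star (1 - P i) * (1 - P i) = 1 - P i := by
      rw [star_sub, star_one, hPs]
      have e : (1 - P i) * (1 - P i) = 1 - P i - P i + P i * P i := by noncomm_ring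
      rw [e, hidem]; abel
    rw [h4, map_sub, hτ1] at h3
    have h5 := (Complex.le_def.mp h3).1
    simp only [Complex.sub_re, Complex.one_re, Complex.zero_re] at h5
    linarith
  have pair_nonneg : ∀ i j : Fin 5, ∀ n : ℕ,
      0 ≤ (τ ((P i * P j * P i)^(2*n))).re := by
    intro i j n
    have hsW : star ((P i * P j * P i)^n) = (P i * P j * P i)^n := by
      rw [star_pow]
      congr 1
      simp only [star_mul, hPs, mul_assoc]
    have h := hτpos _ (pow_mem (mul_mem (mul_mem (hmem i) (hmem j)) (hmem i)) n)
    rw [hsW, ← pow_add, show n + n = 2*n from by omega] at h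
    have h2 := (Complex.le_def.mp h).1
    simpa using h2
  set ρ : ℕ → ℝ := fun k => (τ ((P 0 * P 2 * P 0)^k)).re + (τ ((P 1 * P 3 * P 1)^k)).re + (τ ((P 2 * P 4 * P 2)^k)).re + (τ ((P 3 * P 0 * P 3)^k)).re + (τ ((P 4 * P 1 * P 4)^k)).re with hρ
  -- K1 : 3s ≤ 5 + ρ (2g)
  have key1 : ∀ g : ℕ, 1 ≤ g →
      3*((τ (P 0)).re + (τ (P 1)).re + (τ (P 2)).re + (τ (P 3)).re + (τ (P 4)).re)
        ≤ 5 + ρ (2*g) := by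
    intro g hg
    have k1_0 := K1pos (N := N) (τ := τ) hτpos hτtr (hmem 0) (hmem 2) (hmem 1)
      (hidem 0) (hidem 2) (hidem 1) (hPs 0) (hPs 2) (hPs 1)
      (horth 0) (horth' 0) (horth' 1) (horth 1) g hg
    rw [hτ1] at k1_0
    have k1r_0 := (Complex.le_def.mp k1_0).1
    simp only [Complex.add_re, Complex.sub_re, Complex.one_re, Complex.zero_re] at k1r_0
    have k1_1 := K1pos (N := N) (τ := τ) hτpos hτtr (hmem 1) (hmem 3) (hmem 2)
      (hidem 1) (hidem 3) (hidem 2) (hPs 1) (hPs 3) (hPs 2)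
      (horth 1) (horth' 1) (horth' 2) (horth 2) g hg
    rw [hτ1] at k1_1
    have k1r_1 := (Complex.le_def.mp k1_1).1
    simp only [Complex.add_re, Complex.sub_re, Complex.one_re, Complex.zero_re] at k1r_1
    have k1_2 := K1pos (N := N) (τ := τ) hτpos hτtr (hmem 2) (hmem 4) (hmem 3)
      (hidem 2) (hidem 4) (hidem 3) (hPs 2) (hPs 4) (hPs 3)
      (horth 2) (horth' 2) (horth' 3) (horth 3) g hg
    rw [hτ1] at k1_2
    have k1r_2 := (Complex.le_def.mp k1_2).1
    simp only [Complex.add_re, Complex.sub_re, Complex.one_re, Complex.zero_re] at k1r_2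
    have k1_3 := K1pos (N := N) (τ := τ) hτpos hτtr (hmem 3) (hmem 0) (hmem 4)
      (hidem 3) (hidem 0) (hidem 4) (hPs 3) (hPs 0) (hPs 4)
      (horth 3) (horth' 3) (horth' 4) (horth 4) g hg
    rw [hτ1] at k1_3
    have k1r_3 := (Complex.le_def.mp k1_3).1
    simp only [Complex.add_re, Complex.sub_re, Complex.one_re, Complex.zero_re] at k1r_3
    have k1_4 := K1pos (N := N) (τ := τ) hτpos hτtr (hmem 4) (hmem 1) (hmem 0)
      (hidem 4) (hidem 1) (hidem 0) (hPs 4) (hPs 1) (hPs 0)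
      (horth 4) (horth' 4) (horth' 0) (horth 0) g hg
    rw [hτ1] at k1_4
    have k1r_4 := (Complex.le_def.mp k1_4).1
    simp only [Complex.add_re, Complex.sub_re, Complex.one_re, Complex.zero_re] at k1r_4
    simp only [hρ]
    linarith
  -- K2 : ρ (2g) ≤ 1 + 2 (ρ (2g) - ρ (2g+1))
  have key2 : ∀ g : ℕ, 1 ≤ g → ρ (2*g) ≤ 1 + 2*(ρ (2*g) - ρ (2*g+1)) := by
    intro g hg
    have hWm0 : (P 0 * P 2 * P 0) ∈ N := mul_mem (mul_mem (hmem 0) (hmem 2)) (hmem 0)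
    have hWs0 : star (P 0 * P 2 * P 0) = (P 0 * P 2 * P 0) := by simp only [star_mul, hPs, mul_assoc]
    have hWm1 : (P 1 * P 3 * P 1) ∈ N := mul_mem (mul_mem (hmem 1) (hmem 3)) (hmem 1)
    have hWs1 : star (P 1 * P 3 * P 1) = (P 1 * P 3 * P 1) := by simp only [star_mul, hPs, mul_assoc]
    have hWm2 : (P 2 * P 4 * P 2) ∈ N := mul_mem (mul_mem (hmem 2) (hmem 4)) (hmem 2)
    have hWs2 : star (P 2 * P 4 * P 2) = (P 2 * P 4 * P 2) := by simp only [star_mul, hPs, mul_assoc]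
    have hWm3 : (P 3 * P 0 * P 3) ∈ N := mul_mem (mul_mem (hmem 3) (hmem 0)) (hmem 3)
    have hWs3 : star (P 3 * P 0 * P 3) = (P 3 * P 0 * P 3) := by simp only [star_mul, hPs, mul_assoc]
    have hWm4 : (P 4 * P 1 * P 4) ∈ N := mul_mem (mul_mem (hmem 4) (hmem 1)) (hmem 4)
    have hWs4 : star (P 4 * P 1 * P 4) = (P 4 * P 1 * P 4) := by simp only [star_mul, hPs, mul_assoc]
    have hcN : (1 : H →L[ℂ] H) - ((P 0 * P 2 * P 0)^(2*g) + (P 1 * P 3 * P 1)^(2*g) + (P 2 * P 4 * P 2)^(2*g) + (P 3 * P 0 * P 3)^(2*g) + (P 4 * P 1 * P 4)^(2*g)) ∈ N := by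
      refine sub_mem (one_mem N) ?_
      repeat refine add_mem ?_ ?_
      all_goals exact pow_mem (by assumption) _
    have hcs : star ((1 : H →L[ℂ] H) - ((P 0 * P 2 * P 0)^(2*g) + (P 1 * P 3 * P 1)^(2*g) + (P 2 * P 4 * P 2)^(2*g) + (P 3 * P 0 * P 3)^(2*g) + (P 4 * P 1 * P 4)^(2*g))) = (1 : H →L[ℂ] H) - ((P 0 * P 2 * P 0)^(2*g) + (P 1 * P 3 * P 1)^(2*g) + (P 2 * P 4 * P 2)^(2*g) + (P 3 * P 0 * P 3)^(2*g) + (P 4 * P 1 * P 4)^(2*g)) := by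
      simp only [star_sub, star_add, star_one, star_pow, hWs0, hWs1, hWs2, hWs3, hWs4]
    have sq := hτpos _ hcN
    rw [hcs] at sq
    have hcc : ((1 : H →L[ℂ] H) - ((P 0 * P 2 * P 0)^(2*g) + (P 1 * P 3 * P 1)^(2*g) + (P 2 * P 4 * P 2)^(2*g) + (P 3 * P 0 * P 3)^(2*g) + (P 4 * P 1 * P 4)^(2*g))) * ((1 : H →L[ℂ] H) - ((P 0 * P 2 * P 0)^(2*g) + (P 1 * P 3 * P 1)^(2*g) + (P 2 * P 4 * P 2)^(2*g) + (P 3 * P 0 * P 3)^(2*g) + (P 4 * P 1 * P 4)^(2*g)))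
        = 1 - ((P 0 * P 2 * P 0)^(2*g) + (P 1 * P 3 * P 1)^(2*g) + (P 2 * P 4 * P 2)^(2*g) + (P 3 * P 0 * P 3)^(2*g) + (P 4 * P 1 * P 4)^(2*g)) - ((P 0 * P 2 * P 0)^(2*g) + (P 1 * P 3 * P 1)^(2*g) + (P 2 * P 4 * P 2)^(2*g) + (P 3 * P 0 * P 3)^(2*g) + (P 4 * P 1 * P 4)^(2*g)) + ((P 0 * P 2 * P 0)^(2*g) * (P 0 * P 2 * P 0)^(2*g) + (P 0 * P 2 * P 0)^(2*g) * (P 1 * P 3 * P 1)^(2*g) + (P 0 * P 2 * P 0)^(2*g) * (P 2 * P 4 * P 2)^(2*g) + (P 0 * P 2 * P 0)^(2*g) * (P 3 * P 0 * P 3)^(2*g) + (P 0 * P 2 * P 0)^(2*g) * (P 4 * P 1 * P 4)^(2*g) + (P 1 * P 3 * P 1)^(2*g) * (P 0 * P 2 * P 0)^(2*g) + (P 1 * P 3 * P 1)^(2*g) * (P 1 * P 3 * P 1)^(2*g) + (P 1 * P 3 * P 1)^(2*g) * (P 2 * P 4 * P 2)^(2*g) + (P 1 * P 3 * P 1)^(2*g)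 * (P 3 * P 0 * P 3)^(2*g) + (P 1 * P 3 * P 1)^(2*g) * (P 4 * P 1 * P 4)^(2*g) + (P 2 * P 4 * P 2)^(2*g) * (P 0 * P 2 * P 0)^(2*g) + (P 2 * P 4 * P 2)^(2*g) * (P 1 * P 3 * P 1)^(2*g) + (P 2 * P 4 * P 2)^(2*g) * (P 2 * P 4 * P 2)^(2*g) + (P 2 * P 4 * P 2)^(2*g) * (P 3 * P 0 * P 3)^(2*g) + (P 2 * P 4 * P 2)^(2*g) * (P 4 * P 1 * P 4)^(2*g) + (P 3 * P 0 * P 3)^(2*g) * (P 0 * P 2 * P 0)^(2*g) + (P 3 * P 0 * P 3)^(2*g) * (P 1 * P 3 * P 1)^(2*g) + (P 3 * P 0 * P 3)^(2*g) * (P 2 * P 4 * P 2)^(2*g) + (P 3 * P 0 * P 3)^(2*g) * (P 3 * P 0 * P 3)^(2*g) + (P 3 * P 0 * P 3)^(2*g) * (P 4 * P 1 * P 4)^(2*g) + (P 4 * P 1 * P 4)^(2*g) * (P 0 * P 2 * P 0)^(2*g) + (P 4 * P 1 * P 4)^(2*g) * (P 1 * P 3 * P 1)^(2*g) + (P 4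 * P 1 * P 4)^(2*g) * (P 2 * P 4 * P 2)^(2*g) + (P 4 * P 1 * P 4)^(2*g) * (P 3 * P 0 * P 3)^(2*g) + (P 4 * P 1 * P 4)^(2*g) * (P 4 * P 1 * P 4)^(2*g)) := by
      noncomm_ring
    have hz01 : (P 0 * P 2 * P 0)^(2*g) * (P 1 * P 3 * P 1)^(2*g) = 0 := powMulZero (wordOrth3 (horth 0)) (2*g) (by omega)
    have hz12 : (P 1 * P 3 * P 1)^(2*g) * (P 2 * P 4 * P 2)^(2*g) = 0 := powMulZero (wordOrth3 (horth 1)) (2*g) (by omega)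
    have hz23 : (P 2 * P 4 * P 2)^(2*g) * (P 3 * P 0 * P 3)^(2*g) = 0 := powMulZero (wordOrth3 (horth 2)) (2*g) (by omega)
    have hz34 : (P 3 * P 0 * P 3)^(2*g) * (P 4 * P 1 * P 4)^(2*g) = 0 := powMulZero (wordOrth3 (horth 3)) (2*g) (by omega)
    have hz40 : (P 4 * P 1 * P 4)^(2*g) * (P 0 * P 2 * P 0)^(2*g) = 0 := powMulZero (wordOrth3 (horth 4)) (2*g) (by omega)
    have hz10 : (P 1 * P 3 * P 1)^(2*g) * (P 0 * P 2 * P 0)^(2*g) = 0 := powMulZero (wordOrth3 (horth' 0)) (2*g) (by omega)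
    have hz21 : (P 2 * P 4 * P 2)^(2*g) * (P 1 * P 3 * P 1)^(2*g) = 0 := powMulZero (wordOrth3 (horth' 1)) (2*g) (by omega)
    have hz32 : (P 3 * P 0 * P 3)^(2*g) * (P 2 * P 4 * P 2)^(2*g) = 0 := powMulZero (wordOrth3 (horth' 2)) (2*g) (by omega)
    have hz43 : (P 4 * P 1 * P 4)^(2*g) * (P 3 * P 0 * P 3)^(2*g) = 0 := powMulZero (wordOrth3 (horth' 3)) (2*g) (by omega)
    have hz04 : (P 0 * P 2 * P 0)^(2*g) * (P 4 * P 1 * P 4)^(2*g) = 0 := powMulZero (wordOrth3 (horth' 4)) (2*g) (by omega)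
    rw [hz01, hz12, hz23, hz34, hz40, hz10, hz21, hz32, hz43, hz04] at hcc
    have hd0 : (P 0 * P 2 * P 0)^(2*g) * (P 0 * P 2 * P 0)^(2*g) = (P 0 * P 2 * P 0)^(2*g+2*g) := (pow_add (P 0 * P 2 * P 0) (2*g) (2*g)).symm
    have hd1 : (P 1 * P 3 * P 1)^(2*g) * (P 1 * P 3 * P 1)^(2*g) = (P 1 * P 3 * P 1)^(2*g+2*g) := (pow_add (P 1 * P 3 * P 1) (2*g) (2*g)).symm
    have hd2 : (P 2 * P 4 * P 2)^(2*g) * (P 2 * P 4 * P 2)^(2*g) = (P 2 * P 4 * P 2)^(2*g+2*g) := (pow_add (P 2 * P 4 * P 2) (2*g) (2*g)).symm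
    have hd3 : (P 3 * P 0 * P 3)^(2*g) * (P 3 * P 0 * P 3)^(2*g) = (P 3 * P 0 * P 3)^(2*g+2*g) := (pow_add (P 3 * P 0 * P 3) (2*g) (2*g)).symm
    have hd4 : (P 4 * P 1 * P 4)^(2*g) * (P 4 * P 1 * P 4)^(2*g) = (P 4 * P 1 * P 4)^(2*g+2*g) := (pow_add (P 4 * P 1 * P 4) (2*g) (2*g)).symm
    rw [hd0, hd1, hd2, hd3, hd4] at hcc
    simp only [add_zero, zero_add] at hcc
    rw [hcc] at sq
    simp only [map_add, map_sub] at sq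
    rw [hτ1] at sq
    have sqre := (Complex.le_def.mp sq).1
    simp only [Complex.add_re, Complex.sub_re, Complex.one_re, Complex.zero_re] at sqre
    have dg0 : (τ ((P 0 * P 2 * P 0)^(2*g+2*g))).re ≤ (τ ((P 0 * P 2 * P 0)^(2*g))).re := pair_diff 0 2 (2*g) (2*g+2*g) (by omega) (by omega)
    have dg1 : (τ ((P 1 * P 3 * P 1)^(2*g+2*g))).re ≤ (τ ((P 1 * P 3 * P 1)^(2*g))).re := pair_diff 1 3 (2*g) (2*g+2*g) (by omega) (by omega)
    have dg2 : (τ ((P 2 * P 4 * P 2)^(2*g+2*g))).re ≤ (τ ((P 2 * P 4 * P 2)^(2*g))).re := pair_diff 2 4 (2*g) (2*g+2*g) (by omega) (by omega)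
    have dg3 : (τ ((P 3 * P 0 * P 3)^(2*g+2*g))).re ≤ (τ ((P 3 * P 0 * P 3)^(2*g))).re := pair_diff 3 0 (2*g) (2*g+2*g) (by omega) (by omega)
    have dg4 : (τ ((P 4 * P 1 * P 4)^(2*g+2*g))).re ≤ (τ ((P 4 * P 1 * P 4)^(2*g))).re := pair_diff 4 1 (2*g) (2*g+2*g) (by omega) (by omega)
    have cr0 := crosspos (N := N) (τ := τ) hτpos hτtr (hmem 0) (hmem 2) (hmem 4)
      (hidem 0) (hidem 2) (hidem 4) (hPs 0) (hPs 2) (hPs 4)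
      (horth' 4) (horth 4) g hg
    have crr0 := (Complex.le_def.mp cr0).1
    simp only [Complex.sub_re, Complex.zero_re] at crr0
    have cr1 := crosspos (N := N) (τ := τ) hτpos hτtr (hmem 1) (hmem 3) (hmem 0)
      (hidem 1) (hidem 3) (hidem 0) (hPs 1) (hPs 3) (hPs 0)
      (horth' 0) (horth 0) g hg
    have crr1 := (Complex.le_def.mp cr1).1
    simp only [Complex.sub_re, Complex.zero_re] at crr1
    have cr2 := crosspos (N := N) (τ := τ) hτpos hτtr (hmem 2) (hmem 4) (hmem 1)
      (hidem 2) (hidem 4) (hidem 1) (hPs 2) (hPs 4) (hPs 1)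
      (horth' 1) (horth 1) g hg
    have crr2 := (Complex.le_def.mp cr2).1
    simp only [Complex.sub_re, Complex.zero_re] at crr2
    have cr3 := crosspos (N := N) (τ := τ) hτpos hτtr (hmem 3) (hmem 0) (hmem 2)
      (hidem 3) (hidem 0) (hidem 2) (hPs 3) (hPs 0) (hPs 2)
      (horth' 2) (horth 2) g hg
    have crr3 := (Complex.le_def.mp cr3).1
    simp only [Complex.sub_re, Complex.zero_re] at crr3
    have cr4 := crosspos (N := N) (τ := τ) hτpos hτtr (hmem 4) (hmem 1) (hmem 3)
      (hidem 4) (hidem 1) (hidem 3) (hPs 4) (hPs 1) (hPs 3)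
      (horth' 3) (horth 3) g hg
    have crr4 := (Complex.le_def.mp cr4).1
    simp only [Complex.sub_re, Complex.zero_re] at crr4
    have fl0 : (τ ((P 0 * P 2 * P 0)^(2*g) * (P 3 * P 0 * P 3)^(2*g))).re = (τ ((P 3 * P 0 * P 3)^(2*g) * (P 0 * P 2 * P 0)^(2*g))).re :=
      congrArg Complex.re (hτtr _ (pow_mem hWm0 (2*g)) _ (pow_mem hWm3 (2*g)))
    have fl1 : (τ ((P 1 * P 3 * P 1)^(2*g) * (P 4 * P 1 * P 4)^(2*g))).re = (τ ((P 4 * P 1 * P 4)^(2*g) * (P 1 * P 3 * P 1)^(2*g))).re :=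
      congrArg Complex.re (hτtr _ (pow_mem hWm1 (2*g)) _ (pow_mem hWm4 (2*g)))
    have fl2 : (τ ((P 2 * P 4 * P 2)^(2*g) * (P 0 * P 2 * P 0)^(2*g))).re = (τ ((P 0 * P 2 * P 0)^(2*g) * (P 2 * P 4 * P 2)^(2*g))).re :=
      congrArg Complex.re (hτtr _ (pow_mem hWm2 (2*g)) _ (pow_mem hWm0 (2*g)))
    have fl3 : (τ ((P 3 * P 0 * P 3)^(2*g) * (P 1 * P 3 * P 1)^(2*g))).re = (τ ((P 1 * P 3 * P 1)^(2*g) * (P 3 * P 0 * P 3)^(2*g))).re :=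
      congrArg Complex.re (hτtr _ (pow_mem hWm3 (2*g)) _ (pow_mem hWm1 (2*g)))
    have fl4 : (τ ((P 4 * P 1 * P 4)^(2*g) * (P 2 * P 4 * P 2)^(2*g))).re = (τ ((P 2 * P 4 * P 2)^(2*g) * (P 4 * P 1 * P 4)^(2*g))).re :=
      congrArg Complex.re (hτtr _ (pow_mem hWm4 (2*g)) _ (pow_mem hWm2 (2*g)))
    simp only [hρ]
    linarith
  have rho_mono : ∀ k, 1 ≤ k → ρ (k+1) ≤ ρ k := by
    intro k hk
    simp only [hρ]
    linarith [pair_mono 0 2 k hk, pair_mono 1 3 k hk, pair_mono 2 4 k hk, pair_mono 3 0 k hk, pair_mono 4 1 k hk]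
  have rho_nonneg : ∀ n : ℕ, 0 ≤ ρ (2*n) := by
    intro n
    simp only [hρ]
    linarith [pair_nonneg 0 2 n, pair_nonneg 1 3 n, pair_nonneg 2 4 n, pair_nonneg 3 0 n, pair_nonneg 4 1 n]
  have rho2_le5 : ρ 2 ≤ 5 := by
    simp only [hρ]
    linarith [pair_diff 0 2 1 2 le_rfl (by omega), pair_diff 1 3 1 2 le_rfl (by omega), pair_diff 2 4 1 2 le_rfl (by omega), pair_diff 3 0 1 2 le_rfl (by omega), pair_diff 4 1 1 2 le_rfl (by omega), pair_le1 0 2, pair_le1 1 3, pair_le1 2 4, pair_le1 3 0, pair_le1 4 1]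
  set sR : ℝ := (τ (P 0)).re + (τ (P 1)).re + (τ (P 2)).re + (τ (P 3)).re + (τ (P 4)).re
    with hsR
  have key : ∀ g : ℕ, 1 ≤ g → 3*sR - 6 ≤ 2*(ρ (2*g) - ρ (2*g+1)) := by
    intro g hg
    have h1 := key1 g hg
    have h2 := key2 g hg
    linarith
  have bound : ∀ K : ℕ, (K:ℝ) * (3*sR - 6) ≤ 2*(ρ 2 - ρ (2*K+2)) := by
    intro K
    induction K with
    | zero => simp
    | succ n ih =>
      have hk := key (n+1) (by omega)
      have e1 : 2*(n+1) = 2*n+2 := by omega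
      have e2 : 2*(n+1)+1 = 2*n+3 := by omega
      rw [e2, e1] at hk
      have hmono := rho_mono (2*n+3) (by omega)
      have e3 : 2*n+3+1 = 2*n+4 := by omega
      rw [e3] at hmono
      have e4 : 2*(n+1)+2 = 2*n+4 := by omega
      rw [e4]
      have expand : ((n:ℝ)+1)*(3*sR-6) = (n:ℝ)*(3*sR-6) + (3*sR-6) := by ring
      push_cast
      rw [expand]
      linarith
  have hle : 3*sR - 6 ≤ 0 := by
    by_contra hpos
    push_neg at hpos
    obtain ⟨K, hK⟩ := exists_nat_gt (10 / (3*sR - 6))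
    have h1 := bound K
    have h2 : 0 ≤ ρ (2*K+2) := by
      have := rho_nonneg (K+1)
      have e : 2*(K+1) = 2*K+2 := by omega
      rwa [e] at this
    have h3 : 10 < (K:ℝ)*(3*sR-6) := by
      rw [div_lt_iff₀ hpos] at hK
      linarith
    linarith
  have him : ∀ i, (τ (P i)).im = 0 := by
    intro i
    have h := (Complex.le_def.mp (hposP i)).2
    simpa using h.symm
  rw [Complex.le_def]
  constructor
  · simp only [Complex.add_re]
    have h2re : (2:ℂ).re = 2 := by norm_num
    rw [h2re]
    linarith [hsR]
  · simp only [Complex.add_im, him 0, him 1, him 2, him 3, him 4]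
    norm_num
end

section
/- Let H be a 2-dimensional Hilbert space and P_0,...,P_4 projections on H with P_i P_{i+1} = 0 for all i (indices mod 5). Then at least one P_j = 0, and consequently for every unit vector Ψ ∈ H, ⟨Ψ, (P_0+P_1+P_2+P_3+P_4)Ψ⟩ ≤ 2. -/
open scoped ComplexOrder InnerProductSpace

/-!
The ranges of self-adjoint operators with `P i * P (i + 1) = 0` are mutually orthogonal. In
dimension two, a nonzero subspace orthogonal to a nonzero `U` is all of `Uᗮ`; so if no `P i`
vanished, the ranges would alternate `V, Vᗮ, V, …` around the odd cycle and force `V = Vᗮ = ⊥`.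
Once `P j = 0`, the other four projections form two orthogonal pairs, each summing to a
projection `≤ 1`, hence `∑ i, P i ≤ 2` in the Loewner order.
-/

section

variable {𝕜 E : Type*} [RCLike 𝕜] [NormedAddCommGroup E] [InnerProductSpace 𝕜 E]

namespace Submodule

theorem eq_orthogonal_of_le_orthogonal_of_finrank_eq_two (hdim : Module.finrank 𝕜 E = 2)
    {U W : Submodule 𝕜 E} (hU : U ≠ ⊥) (hW : W ≠ ⊥) (h : W ≤ Uᗮ) : W = Uᗮ := by
  have : FiniteDimensional 𝕜 E := Module.finite_of_finrank_eq_succ hdim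
  refine eq_of_le_of_finrank_le h ?_
  have hsum := U.finrank_add_finrank_orthogonal
  rw [← one_le_finrank_iff] at hU hW
  omega

open Fin.NatCast in
theorem eq_bot_of_odd_cycle_eq_orthogonal [FiniteDimensional 𝕜 E] {n : ℕ} [NeZero n]
    (hn : Odd n) (V : Fin n → Submodule 𝕜 E) (hV : ∀ i, V (i + 1) = (V i)ᗮ) : V 0 = ⊥ := by
  obtain ⟨k, rfl⟩ := hn
  have hstep (m : ℕ) : V ((m + 1 : ℕ) : Fin (2 * k + 1)) = (V m)ᗮ := by
    rw [Nat.cast_succ, hV]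
  have heven (m : ℕ) : V ((2 * m : ℕ) : Fin (2 * k + 1)) = V 0 := by
    induction m with
    | zero => simp
    | succ m ih =>
      rw [show 2 * (m + 1) = 2 * m + 1 + 1 by ring, hstep, hstep, ih, orthogonal_orthogonal]
  have hself : V 0 = (V 0)ᗮ := calc
    V 0 = V ((2 * k + 1 : ℕ) : Fin (2 * k + 1)) := by rw [Fin.natCast_self]
    _ = (V 0)ᗮ := by rw [hstep, heven]
  rw [← inf_orthogonal_eq_bot (V 0), ← hself, inf_idem]

end Submodule

namespace LinearMap

theorem range_le_orthogonal_range_of_mul_eq_zero {p q : E →ₗ[𝕜] E} (hp : p.IsSymmetric)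
    (hpq : p * q = 0) : q.range ≤ p.rangeᗮ := by
  rintro _ ⟨y, rfl⟩
  rw [Submodule.mem_orthogonal]
  rintro _ ⟨x, rfl⟩
  rw [hp, ← Module.End.mul_apply, hpq, zero_apply, inner_zero_right]

theorem exists_eq_zero_of_odd_cycle_of_finrank_eq_two (hdim : Module.finrank 𝕜 E = 2)
    {n : ℕ} [NeZero n] (hn : Odd n) (P : Fin n → E →ₗ[𝕜] E) (hsym : ∀ i, (P i).IsSymmetric)
    (horth : ∀ i, P i * P (i + 1) = 0) : ∃ j, P j = 0 := by
  have : FiniteDimensional 𝕜 E := Module.finite_of_finrank_eq_succ hdim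
  by_contra! hne
  have hrange (i : Fin n) : (P i).range ≠ ⊥ := by
    simpa only [ne_eq, range_eq_bot] using hne i
  have hcycle (i : Fin n) : (P (i + 1)).range = (P i).rangeᗮ :=
    Submodule.eq_orthogonal_of_le_orthogonal_of_finrank_eq_two hdim (hrange i) (hrange (i + 1))
      (range_le_orthogonal_range_of_mul_eq_zero (hsym i) (horth i))
  exact hrange 0 (Submodule.eq_bot_of_odd_cycle_eq_orthogonal hn (fun i => (P i).range) hcycle)

end LinearMap

namespace ContinuousLinearMap

theorem inner_apply_le_of_le_smul_one [CompleteSpace E] {T : E →L[𝕜] E} {c : 𝕜} (h : T ≤ c • 1)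
    (x : E) : ⟪x, T x⟫_𝕜 ≤ c * ‖x‖ ^ 2 := by
  have := ((le_def _ _).mp h).inner_nonneg_right x
  rwa [sub_apply, inner_sub_right, smul_apply, one_apply_eq_self, inner_smul_right,
    inner_self_eq_norm_sq_to_K, sub_nonneg] at this

end ContinuousLinearMap

end

/-- On a 2-dimensional Hilbert space, five projections with cyclically
adjacent products zero must include the zero projection, and consequently no
vector state violates the KCBS inequality. -/
theorem qubit_does_not_violate_kcbs
    {H : Type*} [NormedAddCommGroup H] [InnerProductSpace ℂ H]
    [FiniteDimensional ℂ H] (hdim : Module.finrank ℂ H = 2)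
    (P : Fin 5 → (H →L[ℂ] H))
    (hsa : ∀ i, IsSelfAdjoint (P i))
    (hidem : ∀ i, P i * P i = P i)
    (horth : ∀ i, P i * P (i + 1) = 0) :
    (∃ j, P j = 0) ∧
    ∀ Ψ : H, ‖Ψ‖ = 1 → ⟪Ψ, (∑ i, P i) Ψ⟫_ℂ ≤ 2 := by
  obtain ⟨j, hj⟩ := LinearMap.exists_eq_zero_of_odd_cycle_of_finrank_eq_two hdim (by decide)
    (fun i => (P i : H →ₗ[ℂ] H)) (fun i => (hsa i).isSymmetric)
    (fun i => congrArg ContinuousLinearMap.toLinearMap (horth i))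
  replace hj : P j = 0 := ContinuousLinearMap.ext (LinearMap.congr_fun hj)
  refine ⟨⟨j, hj⟩, fun Ψ hΨ => ?_⟩
  have hpair (i : Fin 5) : P i + P (i + 1) ≤ 1 :=
    (IsStarProjection.add ⟨hidem i, hsa i⟩ ⟨hidem _, hsa _⟩ (horth i)).le_one
  have hsum : ∑ i, P i = P j + (P (j + 1) + P (j + 1 + 1)) + (P (j + 3) + P (j + 3 + 1)) := by
    rw [← Equiv.sum_comp (Equiv.addLeft j), Fin.sum_univ_five]
    simp only [Equiv.coe_addLeft, add_zero, add_assoc]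
    rfl
  have hle : ∑ i, P i ≤ (2 : ℂ) • 1 := by
    rw [hsum, hj, zero_add, two_smul]
    exact add_le_add (hpair _) (hpair _)
  have := ContinuousLinearMap.inner_apply_le_of_le_smul_one hle Ψ
  rwa [hΨ, RCLike.ofReal_one, one_pow, mul_one] at this
end

section
/- If P_0,...,P_4 are nonzero projections on a 3-dimensional Hilbert space with P_i P_{i+1} = 0 for all i mod 5, then rank(P_0) + rank(P_1) + rank(P_2) + rank(P_3) + rank(P_4) ≤ 6. -/
/-!
Adjacent ranges are orthogonal, so in dimension 3 every rank is 1 or 2, and if all ranks are 1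
the sum is 5. If some range `Vᵢ` has dimension 2, both neighbours are forced to be the line
`Vᵢᗮ`, so `V_{i+1} = V_{i-1}`; then `V_{i+1}, V_{i+2}, V_{i+3}` are pairwise orthogonal, their
ranks add up to at most 3, and the total is at most `2 + 1 + 3`.
-/

open Module Submodule

section

variable {𝕜 E : Type*} [RCLike 𝕜] [NormedAddCommGroup E] [InnerProductSpace 𝕜 E]

theorem IsSelfAdjoint.range_isOrtho_range_of_mul_eq_zero [CompleteSpace E] {T S : E →L[𝕜] E}
    (hT : IsSelfAdjoint T) (h : T * S = 0) :
    LinearMap.range (T : E →ₗ[𝕜] E) ⟂ LinearMap.range (S : E →ₗ[𝕜] E) := by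
  rw [isOrtho_iff_inner_eq]
  rintro _ ⟨x, rfl⟩ _ ⟨y, rfl⟩
  have hTS : T (S y) = 0 := by simpa using congrArg (· y) h
  simpa [hTS] using hT.isSymmetric x (S y)

variable [FiniteDimensional 𝕜 E]

theorem Submodule.IsOrtho.finrank_add_le {U V : Submodule 𝕜 E} (h : U ⟂ V) :
    finrank 𝕜 U + finrank 𝕜 V ≤ finrank 𝕜 E :=
  U.finrank_add_finrank_orthogonal ▸ Nat.add_le_add_left (finrank_mono h.ge) _

theorem Submodule.IsOrtho.eq_orthogonal_of_finrank_add_eq {U V : Submodule 𝕜 E} (h : U ⟂ V)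
    (hdim : finrank 𝕜 U + finrank 𝕜 V = finrank 𝕜 E) : V = Uᗮ :=
  eq_of_le_of_finrank_eq h.ge (by have := U.finrank_add_finrank_orthogonal; omega)

theorem Submodule.finrank_add_finrank_add_finrank_le_of_isOrtho {U V W : Submodule 𝕜 E}
    (hUV : U ⟂ V) (hUW : U ⟂ W) (hVW : V ⟂ W) :
    finrank 𝕜 U + finrank 𝕜 V + finrank 𝕜 W ≤ finrank 𝕜 E := by
  have hsup : finrank 𝕜 ↥(V ⊔ W) = finrank 𝕜 V + finrank 𝕜 W := by
    have := finrank_sup_add_finrank_inf_eq V W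
    rwa [hVW.disjoint.eq_bot, finrank_bot, add_zero] at this
  have := (isOrtho_sup_right.2 ⟨hUV, hUW⟩).finrank_add_le
  omega

section Pentagon

variable {V : Fin 5 → Submodule 𝕜 E} (hdim : finrank 𝕜 E = 3)
  (hV : ∀ i, V i ⟂ V (i + 1)) (hne : ∀ i, V i ≠ ⊥)
include hdim hV hne

theorem sum_finrank_le_six_of_finrank_zero_eq_two (h₀ : finrank 𝕜 (V 0) = 2) :
    ∑ i, finrank 𝕜 (V i) ≤ 6 := by
  have hpos : ∀ i, 1 ≤ finrank 𝕜 (V i) := fun i => one_le_finrank_iff.2 (hne i)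
  have h₀₁ : V 0 ⟂ V 1 := hV 0
  have h₀₄ : V 0 ⟂ V 4 := (hV 4).symm
  have h₀₁_le := h₀₁.finrank_add_le
  have h₁ : V 1 = (V 0)ᗮ := h₀₁.eq_orthogonal_of_finrank_add_eq (by have := hpos 1; omega)
  have h₄ : V 4 = (V 0)ᗮ := h₀₄.eq_orthogonal_of_finrank_add_eq
    (by have := h₀₄.finrank_add_le; have := hpos 4; omega)
  have h₁₃ : V 1 ⟂ V 3 := h₁ ▸ h₄ ▸ (hV 3).symm
  have h₁₂ : V 1 ⟂ V 2 := hV 1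
  have h₂₃ : V 2 ⟂ V 3 := hV 2
  have h₁₂₃ := finrank_add_finrank_add_finrank_le_of_isOrtho h₁₂ h₁₃ h₂₃
  rw [Fin.sum_univ_five, h₄, ← h₁]
  omega

theorem sum_finrank_le_six_of_isOrtho_succ : ∑ i, finrank 𝕜 (V i) ≤ 6 := by
  by_cases htwo : ∃ i, finrank 𝕜 (V i) = 2
  · obtain ⟨i, hi⟩ := htwo
    rw [← Equiv.sum_comp (Equiv.addLeft i)]
    refine sum_finrank_le_six_of_finrank_zero_eq_two (V := fun j => V (i + j)) hdim
      (fun j => by simpa only [add_assoc] using hV (i + j)) (fun j => hne (i + j)) ?_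
    rwa [add_zero]
  · push Not at htwo
    have hle : ∀ i, finrank 𝕜 (V i) ≤ 1 := fun i => by
      have := (hV i).finrank_add_le
      have := one_le_finrank_iff.2 (hne (i + 1))
      have := htwo i
      omega
    calc ∑ i, finrank 𝕜 (V i) ≤ ∑ _i : Fin 5, 1 := Finset.sum_le_sum fun i _ => hle i
      _ ≤ 6 := by simp

end Pentagon

end

theorem kcbs_rank_sum_le_six_general
    {H : Type*} [NormedAddCommGroup H] [InnerProductSpace ℂ H]
    [FiniteDimensional ℂ H] (hdim : Module.finrank ℂ H = 3)
    (P : Fin 5 → (H →L[ℂ] H))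
    (hne : ∀ i, P i ≠ 0)
    (hsa : ∀ i, IsSelfAdjoint (P i))
    (horth : ∀ i, P i * P (i + 1) = 0) :
    ∑ i : Fin 5, Module.finrank ℂ (LinearMap.range (P i : H →ₗ[ℂ] H)) ≤ 6 :=
  sum_finrank_le_six_of_isOrtho_succ hdim
    (fun i => (hsa i).range_isOrtho_range_of_mul_eq_zero (horth i))
    (fun i => LinearMap.range_eq_bot.not.2 (ContinuousLinearMap.coe_injective.ne (hne i)))

/-- For nonzero projections `P₀, …, P₄` on a 3-dimensional Hilbert space with
`Pᵢ P_{i+1} = 0` (indices mod 5), the ranks sum to at most `6`. -/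
theorem kcbs_rank_sum_le_six
    {H : Type*} [NormedAddCommGroup H] [InnerProductSpace ℂ H]
    [FiniteDimensional ℂ H] (hdim : Module.finrank ℂ H = 3)
    (P : Fin 5 → (H →L[ℂ] H))
    (hne : ∀ i, P i ≠ 0)
    (hsa : ∀ i, IsSelfAdjoint (P i))
    (hidem : ∀ i, P i * P i = P i)
    (horth : ∀ i, P i * P (i + 1) = 0) :
    ∑ i : Fin 5, Module.finrank ℂ (LinearMap.range (P i : H →ₗ[ℂ] H)) ≤ 6 :=
  kcbs_rank_sum_le_six_general hdim P hne hsa horth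
end
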